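/- Let G be a finite abelian group of odd order n. Then ∑_{(j,k)∈G², j≠k} x_{j+k}²·det(M_G(j,k|j,k)) = ∑_{(i,j,k)∈G³ pairwise distinct} x_{2i}·x_{j+k}²·det(M_G(i,j,k|i,j,k)) in ℤ[x_g : g ∈ G]; equivalently (halving both ordered sums), T_2(M_G) = T_{12}(M_G). -/

import Mathlib

/-!
Write `M` for the Cayley matrix `(x_{a+b})` and `D = det M`. Translation invariance makes the
adjugate of `M` again a Cayley matrix `(z_{a+b})`, and `M · adj M = D · 1` becomes the
convolution identity `∑_t x_{t+h} z_t = D δ_{h,0}`. Jacobi's complementary-minor identity turns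
`D^{|S|} · det M(S|S)` into `D · det (z_{p+q})_{p,q ∈ S}`, so after multiplying by `D³` both sides
are sums of `2 × 2` and `3 × 3` minors of `(z_{a+b})`. Expanding the `3 × 3` minor along the row
of `i`, the sum over `i` contracts `x_{2i} z_{2i}` to `D` and produces `D` times the left-hand
side, while each of the three remaining terms collapses to `D · ∑_a x_a² z_a²` after a change of
variables on `G³` and they cancel. These changes of variables are bijective because doubling is a
bijection of a group of odd order. Finally `D ≠ 0`, since specialising `x` to the indicator of `0`
turns `M` into a permutation matrix.
-/

open MvPolynomial

/-- The principal minor `det A(S|S)` of `A` obtained by deleting the rows and the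
columns indexed by `S`. -/
def pminor {ι : Type*} [Fintype ι] [DecidableEq ι] {R : Type*} [CommRing R]
    (A : Matrix ι ι R) (S : Finset ι) : R :=
  Matrix.det (A.submatrix (fun x : {a : ι // a ∉ S} => (x : ι))
    (fun x : {a : ι // a ∉ S} => (x : ι)))

open Function

namespace Matrix

theorem injective_vec_two_iff {α : Type*} {a b : α} : Injective ![a, b] ↔ a ≠ b := by
  rw [vecCons, Fin.cons_injective_iff]
  simp [Injective]

theorem injective_vec_three_iff {α : Type*} {a b c : α} :
    Injective ![a, b, c] ↔ a ≠ b ∧ a ≠ c ∧ b ≠ c := by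
  rw [vecCons, Fin.cons_injective_iff, injective_vec_two_iff]
  simp [range_cons, not_or, and_assoc, and_left_comm (a := ¬a = c)]

theorem det_submatrix_self_eq_zero_of_not_injective {ι κ R : Type*} [Fintype κ] [DecidableEq κ]
    [CommRing R] (A : Matrix ι ι R) {v : κ → ι} (hv : ¬Injective v) :
    (A.submatrix v v).det = 0 := by
  obtain ⟨p, q, hpq, hne⟩ := not_injective_iff.1 hv
  exact det_zero_of_row_eq hne (funext fun c => by simp [hpq])

variable {ι R : Type*} [Fintype ι] [DecidableEq ι] [CommRing R]

/-- Jacobi's complementary-minor identity, over an arbitrary commutative ring: with `B` the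
identity matrix whose columns in `S` are replaced by those of `adj A`, `A * B` is block
triangular. -/
theorem det_pow_card_mul_pminor (A : Matrix ι ι R) (S : Finset ι) :
    A.det ^ S.card * pminor A S = A.det * (A.adjugate.submatrix ((↑) : S → ι) (↑)).det := by
  set B : Matrix ι ι R := of fun r c => if c ∈ S then A.adjugate r c else (1 : Matrix ι ι R) r c
  set C : Matrix ι ι R := of fun r c => if c ∈ S then A.det * (1 : Matrix ι ι R) r c else A r c
  have hAB : A * B = C := by
    ext r c
    by_cases hc : c ∈ S
    · simp only [B, C, mul_apply, of_apply, if_pos hc]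
      rw [← mul_apply, mul_adjugate, smul_apply, smul_eq_mul]
    · simp only [B, C, mul_apply, of_apply, if_neg hc]
      rw [← mul_apply, mul_one]
  have hB : B.det = (A.adjugate.submatrix ((↑) : S → ι) (↑)).det := by
    rw [twoBlockTriangular_det' B (· ∈ S)]
    · have h1 : toSquareBlockProp B (· ∉ S) = 1 := by
        ext i j
        simp [toSquareBlockProp_def, B, j.2, one_apply, Subtype.ext_iff]
      have h2 : toSquareBlockProp B (· ∈ S) = A.adjugate.submatrix (↑) (↑) := by
        ext i j
        simp [toSquareBlockProp_def, B]
      rw [h1, det_one, mul_one, h2]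
      -- the two sides use different `Fintype` instances on `S`
      convert rfl
    · intro i hi j hj
      simp [B, hj, one_apply, ne_of_mem_of_not_mem hi hj]
  have hC : C.det = A.det ^ S.card * pminor A S := by
    rw [twoBlockTriangular_det C (· ∈ S)]
    · have h1 : toSquareBlockProp C (· ∈ S) = A.det • 1 := by
        ext i j
        simp only [toSquareBlockProp_def, C, of_apply, if_pos j.2, smul_apply, smul_eq_mul]
        by_cases h : i = j <;> simp [h, one_apply]
      have h2 : toSquareBlockProp C (· ∉ S) = A.submatrix (↑) (↑) := by
        ext i j
        simp [toSquareBlockProp_def, C, j.2]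
      rw [h1, h2]
      simp [pminor, Fintype.card_subtype]
    · intro i hi j hj
      simp [C, hj, one_apply, (ne_of_mem_of_not_mem hj hi).symm]
  rw [← hC, ← hAB, det_mul, hB]

theorem det_pow_card_mul_pminor_of_injective {κ : Type*} [Fintype κ] [DecidableEq κ]
    (A : Matrix ι ι R) {v : κ → ι} (hv : Injective v) {S : Finset ι}
    (hS : ∀ a, a ∈ S ↔ a ∈ Set.range v) :
    A.det ^ Fintype.card κ * pminor A S = A.det * (A.adjugate.submatrix v v).det := by
  let e : κ ≃ S := Equiv.ofBijective (fun p => ⟨v p, (hS _).2 ⟨p, rfl⟩⟩)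
    ⟨fun p q h => hv (congrArg Subtype.val h), fun a => by
      obtain ⟨p, hp⟩ := (hS a).1 a.2
      exact ⟨p, Subtype.ext hp⟩⟩
  rw [Fintype.card_congr e, Fintype.card_coe, det_pow_card_mul_pminor,
    ← det_submatrix_equiv_self e]
  rfl

theorem det_submatrix_perm_symm (σ : Equiv.Perm ι) (A : Matrix ι ι R) :
    (A.submatrix σ σ.symm).det = A.det := by
  rw [show A.submatrix σ σ.symm = (A.submatrix σ id).submatrix id σ.symm from rfl, det_permute',
    det_permute, Equiv.Perm.sign_symm, ← mul_assoc, ← Int.cast_mul, ← Units.val_mul,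
    Int.units_mul_self, Units.val_one, Int.cast_one, one_mul]

theorem adjugate_submatrix_perm_symm (σ : Equiv.Perm ι) (A : Matrix ι ι R) :
    (A.submatrix σ σ.symm).adjugate = A.adjugate.submatrix σ.symm σ := by
  ext i j
  have hrow : (fun c => Pi.single (M := fun _ => R) i 1 (σ c)) = Pi.single (σ.symm i) 1 := by
    ext c
    simp [Pi.single_apply, Equiv.eq_symm_apply]
  rw [adjugate_apply, updateRow_submatrix_equiv, Equiv.symm_symm, det_submatrix_perm_symm, hrow,
    submatrix_apply, adjugate_apply]

end Matrix

open Matrix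

section CayleyMatrix

variable {G R : Type*} [AddCommGroup G] [CommRing R]

def cayleyMatrix (x : G → R) : Matrix G G R := of fun a b => x (a + b)

theorem det_cayleyMatrix_submatrix_fin_three (z : G → R) (i j k : G) :
    ((cayleyMatrix z).submatrix ![i, j, k] ![i, j, k]).det =
      z (i + i) * ((cayleyMatrix z).submatrix ![j, k] ![j, k]).det -
        (z (k + k) * z (i + j) ^ 2 + z (j + j) * z (i + k) ^ 2 -
          2 * (z (j + k) * z (i + j) * z (i + k))) := by
  rw [det_fin_three, det_fin_two]
  simp only [cayleyMatrix, submatrix_apply, of_apply, cons_val]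
  rw [add_comm k j, add_comm k i, add_comm j i]
  ring

variable [DecidableEq G]

theorem cayleyMatrix_single_zero_one :
    cayleyMatrix (Pi.single 0 1 : G → R) = (Equiv.neg G).permMatrix R := by
  ext a b
  simp [cayleyMatrix, Equiv.Perm.permMatrix, PEquiv.toMatrix_apply, Pi.single_apply,
    add_eq_zero_iff_neg_eq, eq_comm]

variable [Fintype G]

def cayleyAdjugate (x : G → R) (g : G) : R := (cayleyMatrix x).adjugate g 0

theorem adjugate_cayleyMatrix (x : G → R) :
    (cayleyMatrix x).adjugate = cayleyMatrix (cayleyAdjugate x) := by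
  ext a b
  have hinv : (cayleyMatrix x).submatrix (Equiv.addRight (-b)) (Equiv.addRight (-b)).symm =
      cayleyMatrix x := by
    ext c d
    simp only [cayleyMatrix, submatrix_apply, of_apply, Equiv.coe_addRight, Equiv.addRight_symm]
    abel_nf
  conv_lhs => rw [← hinv, adjugate_submatrix_perm_symm]
  simp [cayleyMatrix, cayleyAdjugate]

theorem sum_mul_cayleyAdjugate (x : G → R) (h : G) :
    ∑ t, x (t + h) * cayleyAdjugate x t = if h = 0 then (cayleyMatrix x).det else 0 := by
  have := congrFun (congrFun (mul_adjugate (cayleyMatrix x)) h) 0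
  simp only [mul_apply, cayleyMatrix, of_apply, Matrix.smul_apply, one_apply, smul_eq_mul,
    mul_ite, mul_one, mul_zero] at this
  simpa only [add_comm h, cayleyAdjugate, cayleyMatrix] using this

theorem det_cayleyMatrix_X_ne_zero [Nontrivial R] :
    (cayleyMatrix (X : G → MvPolynomial G R)).det ≠ 0 := by
  intro h
  have hmap := RingHom.map_det (MvPolynomial.eval (Pi.single 0 1 : G → R)) (cayleyMatrix X)
  have hM : (MvPolynomial.eval (Pi.single 0 1 : G → R)).mapMatrix (cayleyMatrix X) =
      cayleyMatrix (Pi.single 0 1 : G → R) := by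
    ext a b
    simp [cayleyMatrix]
  rw [h, map_zero, hM, cayleyMatrix_single_zero_one, det_permutation] at hmap
  exact ((Units.isUnit _).map (Int.castRingHom R)).ne_zero hmap.symm

theorem det_pow_mul_pminor_cayleyMatrix (x : G → R) {n : ℕ} {v : Fin n → G} (hv : Injective v)
    {S : Finset G} (hS : ∀ a, a ∈ S ↔ a ∈ Set.range v) :
    (cayleyMatrix x).det ^ n * pminor (cayleyMatrix x) S =
      (cayleyMatrix x).det * ((cayleyMatrix (cayleyAdjugate x)).submatrix v v).det := by
  simpa [adjugate_cayleyMatrix] using det_pow_card_mul_pminor_of_injective (cayleyMatrix x) hv hS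

theorem det_sq_mul_sum_pminor_pair (x : G → R) :
    (cayleyMatrix x).det ^ 2 * ∑ p ∈ Finset.univ.filter (fun p : G × G => p.1 ≠ p.2),
        x (p.1 + p.2) ^ 2 * pminor (cayleyMatrix x) {p.1, p.2} =
      (cayleyMatrix x).det * ∑ j, ∑ k, x (j + k) ^ 2 *
        ((cayleyMatrix (cayleyAdjugate x)).submatrix ![j, k] ![j, k]).det := by
  rw [Finset.mul_sum, Finset.mul_sum, Finset.sum_filter]
  simp only [Fintype.sum_prod_type, Finset.mul_sum]
  refine Finset.sum_congr rfl fun j _ => Finset.sum_congr rfl fun k _ => ?_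
  split_ifs with hjk
  · rw [mul_left_comm, det_pow_mul_pminor_cayleyMatrix x (injective_vec_two_iff.2 hjk)
      fun a => by simp [range_cons, or_comm]]
    ring
  · rw [det_submatrix_self_eq_zero_of_not_injective _ (injective_vec_two_iff.not.2 hjk)]
    ring

theorem det_cube_mul_sum_pminor_triple (x : G → R) :
    (cayleyMatrix x).det ^ 3 * ∑ t ∈ Finset.univ.filter
        (fun t : G × G × G => t.1 ≠ t.2.1 ∧ t.1 ≠ t.2.2 ∧ t.2.1 ≠ t.2.2),
        x (t.1 + t.1) * x (t.2.1 + t.2.2) ^ 2 * pminor (cayleyMatrix x) {t.1, t.2.1, t.2.2} =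
      (cayleyMatrix x).det * ∑ i, ∑ j, ∑ k, x (i + i) * x (j + k) ^ 2 *
        ((cayleyMatrix (cayleyAdjugate x)).submatrix ![i, j, k] ![i, j, k]).det := by
  rw [Finset.mul_sum, Finset.mul_sum, Finset.sum_filter]
  simp only [Fintype.sum_prod_type, Finset.mul_sum]
  refine Finset.sum_congr rfl fun i _ => Finset.sum_congr rfl fun j _ =>
    Finset.sum_congr rfl fun k _ => ?_
  split_ifs with hijk
  · rw [mul_left_comm, det_pow_mul_pminor_cayleyMatrix x (injective_vec_three_iff.2 hijk)
      fun a => by simp [range_cons, or_comm, or_left_comm]]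
    ring
  · rw [det_submatrix_self_eq_zero_of_not_injective _ (injective_vec_three_iff.not.2 hijk)]
    ring

end CayleyMatrix

section OddOrder

variable {G : Type*} [AddCommGroup G] [Fintype G]

theorem add_self_bijective (hodd : Odd (Fintype.card G)) : Bijective fun g : G => g + g := by
  have hcop : (Nat.card G).Coprime 2 := by rwa [Nat.card_eq_fintype_card, Nat.coprime_two_right]
  convert (nsmulCoprime hcop).bijective using 1
  ext g
  rw [nsmulCoprime_apply, two_nsmul]

theorem sum_comp_add_self {M : Type*} [AddCommMonoid M] (hodd : Odd (Fintype.card G))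
    (f : G → M) : ∑ g, f (g + g) = ∑ g, f g :=
  Fintype.sum_bijective _ (add_self_bijective hodd) _ _ fun _ => rfl

theorem bijective_pairwise_sums (hodd : Odd (Fintype.card G)) :
    Bijective fun p : G × G × G => (p.2.1 + p.2.2, p.1 + p.2.1, p.1 + p.2.2) := by
  refine Finite.injective_iff_bijective.1 fun p q hpq => ?_
  simp only [Prod.mk.injEq] at hpq
  obtain ⟨h1, h2, h3⟩ := hpq
  have hi : p.1 = q.1 := (add_self_bijective hodd).1 <| by
    show p.1 + p.1 = q.1 + q.1
    calc p.1 + p.1 = (p.1 + p.2.1) + (p.1 + p.2.2) - (p.2.1 + p.2.2) := by abel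
      _ = (q.1 + q.2.1) + (q.1 + q.2.2) - (q.2.1 + q.2.2) := by rw [h1, h2, h3]
      _ = q.1 + q.1 := by abel
  rw [hi] at h2 h3
  exact Prod.ext hi (Prod.ext (add_left_cancel h2) (add_left_cancel h3))

theorem bijective_chain_sums (hodd : Odd (Fintype.card G)) :
    Bijective fun p : G × G × G => (p.1 + p.2.1, p.2.1 + p.2.2, p.2.2 + p.2.2) := by
  refine Finite.injective_iff_bijective.1 fun p q hpq => ?_
  simp only [Prod.mk.injEq] at hpq
  obtain ⟨h1, h2, h3⟩ := hpq
  have hk : p.2.2 = q.2.2 := (add_self_bijective hodd).1 h3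
  rw [hk] at h2
  have hj := add_right_cancel h2
  rw [hj] at h1
  exact Prod.ext (add_right_cancel h1) (Prod.ext hj hk)

variable [DecidableEq G] {R : Type*} [CommRing R] {x z : G → R} {D : R}

theorem sum_triple_mixed (hodd : Odd (Fintype.card G))
    (hconv : ∀ h, ∑ t, x (t + h) * z t = if h = 0 then D else 0) :
    ∑ i, ∑ j, ∑ k, x (i + i) * x (j + k) ^ 2 * (z (j + k) * z (i + j) * z (i + k)) =
      D * ∑ t, x t ^ 2 * z t ^ 2 := by
  have hcontract : ∀ t u, ∑ w, x (u + w - t) * x t ^ 2 * (z t * z u * z w) =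
      if u = t then D * (x t ^ 2 * z t ^ 2) else 0 := by
    intro t u
    calc _ = x t ^ 2 * z t * z u * ∑ w, x (w + (u - t)) * z w := by
          rw [Finset.mul_sum]
          refine Finset.sum_congr rfl fun w _ => ?_
          rw [show u + w - t = w + (u - t) by abel]
          ring
      _ = _ := by
          simp only [hconv, sub_eq_zero]
          split_ifs with h
          · rw [h]; ring
          · rw [mul_zero]
  calc _ = ∑ p : G × G × G, x (p.1 + p.1) * x (p.2.1 + p.2.2) ^ 2 *
        (z (p.2.1 + p.2.2) * z (p.1 + p.2.1) * z (p.1 + p.2.2)) := by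
        simp only [Fintype.sum_prod_type]
    _ = ∑ q : G × G × G, x (q.2.1 + q.2.2 - q.1) * x q.1 ^ 2 * (z q.1 * z q.2.1 * z q.2.2) :=
        Fintype.sum_bijective _ (bijective_pairwise_sums hodd) _ _ fun p => by
          dsimp only
          rw [show p.1 + p.2.1 + (p.1 + p.2.2) - (p.2.1 + p.2.2) = p.1 + p.1 by abel]
    _ = _ := by
        simp only [Fintype.sum_prod_type, hcontract, Finset.sum_ite_eq', Finset.mem_univ, if_true,
          Finset.mul_sum]

theorem sum_triple_square (hodd : Odd (Fintype.card G))
    (hconv : ∀ h, ∑ t, x (t + h) * z t = if h = 0 then D else 0) :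
    ∑ i, ∑ j, ∑ k, x (i + i) * x (j + k) ^ 2 * (z (k + k) * z (i + j) ^ 2) =
      D * ∑ t, x t ^ 2 * z t ^ 2 := by
  have hcontract : ∀ a c, ∑ b, x (b + (a + a - (c + c))) * x c ^ 2 * (z b * z a ^ 2) =
      if a = c then D * (x a ^ 2 * z a ^ 2) else 0 := by
    intro a c
    calc _ = x c ^ 2 * z a ^ 2 * ∑ b, x (b + (a + a - (c + c))) * z b := by
          rw [Finset.mul_sum]
          exact Finset.sum_congr rfl fun b _ => by ring
      _ = _ := by
          simp only [hconv, sub_eq_zero, (add_self_bijective hodd).1.eq_iff]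
          split_ifs with h
          · rw [h]; ring
          · rw [mul_zero]
  calc _ = ∑ p : G × G × G, x (p.1 + p.1) * x (p.2.1 + p.2.2) ^ 2 *
        (z (p.2.2 + p.2.2) * z (p.1 + p.2.1) ^ 2) := by
        simp only [Fintype.sum_prod_type]
    _ = ∑ q : G × G × G, x (q.2.2 + (q.1 + q.1 - (q.2.1 + q.2.1))) * x q.2.1 ^ 2 *
          (z q.2.2 * z q.1 ^ 2) :=
        Fintype.sum_bijective _ (bijective_chain_sums hodd) _ _ fun p => by
          dsimp only
          rw [show p.2.2 + p.2.2 + (p.1 + p.2.1 + (p.1 + p.2.1) - (p.2.1 + p.2.2 + (p.2.1 + p.2.2)))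
            = p.1 + p.1 by abel]
    _ = _ := by
        simp only [Fintype.sum_prod_type, hcontract, Finset.sum_ite_eq, Finset.mem_univ, if_true,
          Finset.mul_sum]

theorem sum_mul_det_cayleyMatrix_submatrix_fin_three (hodd : Odd (Fintype.card G))
    (hconv : ∀ h, ∑ t, x (t + h) * z t = if h = 0 then D else 0) :
    ∑ i, ∑ j, ∑ k, x (i + i) * x (j + k) ^ 2 *
        ((cayleyMatrix z).submatrix ![i, j, k] ![i, j, k]).det =
      D * ∑ j, ∑ k, x (j + k) ^ 2 * ((cayleyMatrix z).submatrix ![j, k] ![j, k]).det := by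
  have hdiag : ∑ i, x (i + i) * z (i + i) = D := by
    rw [sum_comp_add_self hodd fun g => x g * z g]
    simpa using hconv 0
  have hswap : ∑ i, ∑ j, ∑ k, x (i + i) * x (j + k) ^ 2 * (z (j + j) * z (i + k) ^ 2) =
      ∑ i, ∑ j, ∑ k, x (i + i) * x (j + k) ^ 2 * (z (k + k) * z (i + j) ^ 2) :=
    Finset.sum_congr rfl fun i _ => by
      rw [Finset.sum_comm]
      simp only [add_comm]
  calc _ = ∑ i, ∑ j, ∑ k, (x (i + i) * z (i + i) * (x (j + k) ^ 2 *
          ((cayleyMatrix z).submatrix ![j, k] ![j, k]).det) -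
        (x (i + i) * x (j + k) ^ 2 * (z (k + k) * z (i + j) ^ 2) +
          x (i + i) * x (j + k) ^ 2 * (z (j + j) * z (i + k) ^ 2) -
          2 * (x (i + i) * x (j + k) ^ 2 * (z (j + k) * z (i + j) * z (i + k))))) := by
        simp only [det_cayleyMatrix_submatrix_fin_three]
        refine Finset.sum_congr rfl fun i _ => Finset.sum_congr rfl fun j _ =>
          Finset.sum_congr rfl fun k _ => by ring
    _ = (∑ i, x (i + i) * z (i + i)) *
          ∑ j, ∑ k, x (j + k) ^ 2 * ((cayleyMatrix z).submatrix ![j, k] ![j, k]).det -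
        (∑ i, ∑ j, ∑ k, x (i + i) * x (j + k) ^ 2 * (z (k + k) * z (i + j) ^ 2) +
          ∑ i, ∑ j, ∑ k, x (i + i) * x (j + k) ^ 2 * (z (j + j) * z (i + k) ^ 2) -
          2 * ∑ i, ∑ j, ∑ k, x (i + i) * x (j + k) ^ 2 * (z (j + k) * z (i + j) * z (i + k))) := by
        rw [Finset.sum_mul]
        simp only [Finset.sum_sub_distrib, Finset.sum_add_distrib, Finset.mul_sum]
    _ = _ := by
        rw [hswap, sum_triple_square hodd hconv, sum_triple_mixed hodd hconv, hdiag]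
        ring

end OddOrder

/-- **`T₂(M_G) = T₁₂(M_G)` for odd order (ordered-sum form).** If `|G|` is odd, then
`∑_{j≠k} x_{j+k}² · det M_G(j,k|j,k)
  = ∑_{i,j,k pairwise distinct} x_{2i} · x_{j+k}² · det M_G(i,j,k|i,j,k)`. -/
theorem stmt_16 {G : Type*} [AddCommGroup G] [Fintype G] [DecidableEq G]
    (hodd : Odd (Fintype.card G)) :
    (∑ p ∈ Finset.univ.filter (fun p : G × G => p.1 ≠ p.2),
        (X (p.1 + p.2) : MvPolynomial G ℤ) ^ 2 *
          pminor (Matrix.of fun a b : G => (X (a + b) : MvPolynomial G ℤ)) {p.1, p.2}) =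
      ∑ t ∈ Finset.univ.filter
          (fun t : G × G × G => t.1 ≠ t.2.1 ∧ t.1 ≠ t.2.2 ∧ t.2.1 ≠ t.2.2),
        (X (t.1 + t.1) : MvPolynomial G ℤ) * (X (t.2.1 + t.2.2) : MvPolynomial G ℤ) ^ 2 *
          pminor (Matrix.of fun a b : G => (X (a + b) : MvPolynomial G ℤ))
            {t.1, t.2.1, t.2.2} := by
  set x : G → MvPolynomial G ℤ := X
  rw [show (of fun a b => x (a + b)) = cayleyMatrix x from rfl]
  have hcore := sum_mul_det_cayleyMatrix_submatrix_fin_three hodd (sum_mul_cayleyAdjugate x)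
  refine mul_left_cancel₀ (pow_ne_zero 3 det_cayleyMatrix_X_ne_zero) ?_
  linear_combination (cayleyMatrix x).det * det_sq_mul_sum_pminor_pair x -
    det_cube_mul_sum_pminor_triple x - (cayleyMatrix x).det * hcore
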